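/- arXiv:1701.06800 — 6 statements merged into one kernel-verified Lean document; each statement's English description precedes it below -/
import Mathlib

section
/- Under any oblivious message adversary whose communication graphs are all rooted trees on n nodes, the dissemination time is at most n(n-2)+1 rounds, i.e., after n(n-2)+1 rounds some process p satisfies |S_p(r)| = n. -/
/-- Influence sets: `influence G p r` is the set of processes that know
about `p` at the end of round `r`, where `G r` is the round-`r`
communication graph (edges `G r q q'` mean `q` sends to `q'`). -/
def influence {n : ℕ} (G : ℕ → Fin n → Fin n → Prop) (p : Fin n) : ℕ → Set (Fin n)
  | 0 => {p}
  | r + 1 => influence G p r ∪ {q' | ∃ q ∈ influence G p r, G (r + 1) q q'}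

/-- `E` is a directed tree on `Fin n` rooted at `root`, edges oriented away
from the root: every node is reachable from the root, every non-root node
has a unique parent, and the root has no parent. -/
def IsRootedTree {n : ℕ} (E : Fin n → Fin n → Prop) (root : Fin n) : Prop :=
  (∀ v, Relation.ReflTransGen E root v) ∧
  (∀ v, v ≠ root → ∃! u, E u v) ∧
  (∀ u, ¬ E u root)

/-- A leaf of a directed graph: a node with no outgoing edge. -/
def IsLeaf {n : ℕ} (E : Fin n → Fin n → Prop) (v : Fin n) : Prop := ∀ w, ¬ E v w

/-- The successor relation of the chain `σ 0 → σ 1 → ⋯ → σ (n-1)`. -/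
def chainEdge {n : ℕ} (σ : Fin n ≃ Fin n) (u v : Fin n) : Prop :=
  ∃ i j : Fin n, (j : ℕ) = (i : ℕ) + 1 ∧ u = σ i ∧ v = σ j

/-- `E` is a directed chain (rooted path) on all `n` nodes. -/
def IsDirChain {n : ℕ} (E : Fin n → Fin n → Prop) : Prop :=
  ∃ σ : Fin n ≃ Fin n, ∀ u v, E u v ↔ chainEdge σ u v

/-- `E` is an undirected path on all `n` nodes (messages traverse edges in
both directions). -/
def IsUndirPath {n : ℕ} (E : Fin n → Fin n → Prop) : Prop :=
  ∃ σ : Fin n ≃ Fin n, ∀ u v, E u v ↔ (chainEdge σ u v ∨ chainEdge σ v u)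

/-- The influence sets indexed by `I` cover `Π` at time `r`. -/
def isCovering {n : ℕ} (G : ℕ → Fin n → Fin n → Prop) (I : Set (Fin n)) (r : ℕ) : Prop :=
  ⋃ p ∈ I, influence G p r = Set.univ

/-- A strict covering: no member can be removed. -/
def isStrictCovering {n : ℕ} (G : ℕ → Fin n → Fin n → Prop) (I : Set (Fin n)) (r : ℕ) : Prop :=
  isCovering G I r ∧ ∀ p ∈ I, ¬ isCovering G (I \ {p}) r


lemma influence_mono {n : ℕ} (G : ℕ → Fin n → Fin n → Prop) (p : Fin n) (r : ℕ) :
    influence G p r ⊆ influence G p (r + 1) := Set.subset_union_left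

lemma mem_influence_self {n : ℕ} (G : ℕ → Fin n → Fin n → Prop) (p : Fin n) (r : ℕ) :
    p ∈ influence G p r := by
  induction r with
  | zero => exact rfl
  | succ r ih => exact Set.mem_union_left _ ih

lemma influence_ncard_le {n : ℕ} (G : ℕ → Fin n → Fin n → Prop) (p : Fin n) (r : ℕ) :
    (influence G p r).ncard ≤ n := by
  have := Set.ncard_le_ncard (Set.subset_univ (influence G p r)) Set.finite_univ
  simpa [Set.ncard_univ] using this

lemma influence_growth {n : ℕ} (G : ℕ → Fin n → Fin n → Prop) (p root : Fin n) (r : ℕ)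
    (h : IsRootedTree (G (r + 1)) root) (hmem : root ∈ influence G p r) :
    min n ((influence G p r).ncard + 1) ≤ (influence G p (r + 1)).ncard := by
  by_cases huniv : influence G p r = Set.univ
  · have h2 : influence G p (r + 1) = Set.univ :=
      Set.eq_univ_of_univ_subset (huniv ▸ influence_mono G p r)
    rw [h2, Set.ncard_univ]
    simp
  · obtain ⟨v, hv⟩ : ∃ v, v ∉ influence G p r := by
      by_contra hc; push_neg at hc; exact huniv (Set.eq_univ_of_forall hc)
    have key : ∀ w, Relation.ReflTransGen (G (r + 1)) root w →
        w ∈ influence G p r ∨ ∃ x, x ∉ influence G p r ∧ x ∈ influence G p (r + 1) := by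
      intro w hw
      induction hw with
      | refl => exact Or.inl hmem
      | @tail b c hab hbc ih =>
        rcases ih with hb | hx
        · by_cases hc : c ∈ influence G p r
          · exact Or.inl hc
          · exact Or.inr ⟨c, hc, Set.mem_union_right _ ⟨b, hb, hbc⟩⟩
        · exact Or.inr hx
    rcases key v (h.1 v) with h1 | ⟨x, hx1, hx2⟩
    · exact absurd h1 hv
    · have hsub : insert x (influence G p r) ⊆ influence G p (r + 1) :=
        Set.insert_subset hx2 (influence_mono G p r)
      have hle := Set.ncard_le_ncard hsub (Set.toFinite _)
      rw [Set.ncard_insert_of_notMem hx1 (Set.toFinite _)] at hle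
      exact le_trans (min_le_right _ _) hle

/-- under an oblivious message adversary whose graphs are all
rooted trees on `n ≥ 2` nodes, after `n(n-2)+1` rounds some process is known
to everybody. -/
theorem dissemination_rooted_trees_quadratic {n : ℕ} (hn : 2 ≤ n)
    (G : ℕ → Fin n → Fin n → Prop)
    (htree : ∀ r, 1 ≤ r → ∃ root, IsRootedTree (G r) root) :
    ∃ p : Fin n, (influence G p (n * (n - 2) + 1)).ncard = n := by
  classical
  set R := n * (n - 2) + 1 with hR
  have hnpos : 0 < n := by omega
  haveI : NeZero n := ⟨by omega⟩
  -- choose a root for each round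
  let f : ℕ → Fin n := fun r => if h : 1 ≤ r then (htree r h).choose else 0
  have hf : ∀ r, 1 ≤ r → IsRootedTree (G r) (f r) := by
    intro r hr
    simp only [f, dif_pos hr]
    exact (htree r hr).choose_spec
  -- pigeonhole
  have hcard : (Finset.Icc 1 R).card = R := by simp
  obtain ⟨b, -, hb⟩ := Finset.exists_lt_card_fiber_of_mul_lt_card_of_maps_to
    (s := Finset.Icc 1 R) (t := (Finset.univ : Finset (Fin n))) (f := f) (n := n - 2)
    (fun a _ => Finset.mem_univ _)
    (by rw [hcard, Finset.card_univ, Fintype.card_fin]; omega)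
  set T := (Finset.Icc 1 R).filter (fun x => f x = b) with hT
  have hTcard : n - 2 < T.card := hb
  have hTmem : ∀ r ∈ T, 1 ≤ r ∧ r ≤ R ∧ f r = b := by
    intro r hr
    simp only [hT, Finset.mem_filter, Finset.mem_Icc] at hr
    exact ⟨hr.1.1, hr.1.2, hr.2⟩
  -- main induction
  have main : ∀ r, min n (1 + (T.filter (· ≤ r)).card) ≤ (influence G b r).ncard := by
    intro r
    induction r with
    | zero =>
      have h0 : T.filter (· ≤ 0) = ∅ := by
        apply Finset.filter_false_of_mem
        intro x hx
        have := (hTmem x hx).1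
        omega
      rw [h0]
      simp only [Finset.card_empty]
      have : (influence G b 0).ncard = 1 := Set.ncard_singleton b
      omega
    | succ r ih =>
      have hmono : (influence G b r).ncard ≤ (influence G b (r + 1)).ncard :=
        Set.ncard_le_ncard (influence_mono G b r) (Set.toFinite _)
      have hle := influence_ncard_le G b (r + 1)
      by_cases hmem : (r + 1) ∈ T
      · have hgrow := influence_growth G b b r
          ((hTmem _ hmem).2.2 ▸ hf (r + 1) (by omega)) (mem_influence_self G b r)
        have hfil : (T.filter (· ≤ r + 1)).card ≤ (T.filter (· ≤ r)).card + 1 := by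
          have hsub : T.filter (· ≤ r + 1) ⊆ insert (r + 1) (T.filter (· ≤ r)) := by
            intro x hx
            simp only [Finset.mem_filter] at hx
            rcases eq_or_ne x (r + 1) with h | h
            · subst h; exact Finset.mem_insert_self _ _
            · exact Finset.mem_insert_of_mem (Finset.mem_filter.2 ⟨hx.1, by omega⟩)
          calc (T.filter (· ≤ r + 1)).card ≤ _ := Finset.card_le_card hsub
            _ ≤ (T.filter (· ≤ r)).card + 1 := Finset.card_insert_le _ _
        omega
      · have hfil : T.filter (· ≤ r + 1) = T.filter (· ≤ r) := by
          apply Finset.filter_congr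
          intro x hx
          have : x ≠ r + 1 := fun h => hmem (h ▸ hx)
          omega
        rw [hfil]
        omega
  -- conclude
  refine ⟨b, ?_⟩
  have hfin : T.filter (· ≤ R) = T := by
    apply Finset.filter_true_of_mem
    intro x hx
    exact (hTmem x hx).2.1
  have := main R
  rw [hfin] at this
  have hle := influence_ncard_le G b R
  omega
end

section
/- Let C be a strict covering of Π at time r, and suppose the round-(r+1) communication graph is a rooted tree. Then after round r+1, every covering set except possibly the one containing the root of G_{r+1} loses at least one of its unique nodes (i.e., a node that was unique to that set at time r is no longer unique at time r+1). -/
/-- given a strict covering at time `r` and a rooted tree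
`G (r+1)`, every covering set not containing the root loses one of its
unique nodes: some node unique to it at time `r` also belongs to another
covering set at time `r+1`. -/
theorem strictCovering_loses_unique_nodes {n : ℕ} (G : ℕ → Fin n → Fin n → Prop)
    (I : Set (Fin n)) (r : ℕ) (root : Fin n)
    (hstrict : isStrictCovering G I r)
    (htree : IsRootedTree (G (r + 1)) root) :
    ∀ p ∈ I, root ∉ influence G p r →
      ∃ x ∈ influence G p r,
        (∀ q ∈ I, x ∈ influence G q r → q = p) ∧
        ∃ q ∈ I, q ≠ p ∧ x ∈ influence G q (r + 1) := by
  obtain ⟨hcov, hstr⟩ := hstrict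
  intro p hp hroot
  have hcovmem : ∀ x : Fin n, ∃ q ∈ I, x ∈ influence G q r := by
    intro x
    have hx : x ∈ ⋃ q ∈ I, influence G q r := hcov ▸ Set.mem_univ x
    simpa using hx
  have hz : ∃ z : Fin n, ∀ q ∈ I \ {p}, z ∉ influence G q r := by
    by_contra h
    push_neg at h
    apply hstr p hp
    ext x
    simp only [Set.mem_iUnion, Set.mem_univ, iff_true]
    obtain ⟨q, hq, hx⟩ := h x
    exact ⟨q, hq, hx⟩
  obtain ⟨z, hz⟩ := hz
  have hzp : z ∈ influence G p r := by
    obtain ⟨q, hq, hx⟩ := hcovmem z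
    by_cases hqp : q = p
    · exact hqp ▸ hx
    · exact absurd hx (hz q ⟨hq, hqp⟩)
  have hzuniq : ∀ q ∈ I, z ∈ influence G q r → q = p := by
    intro q hq hzq
    by_contra hne
    exact hz q ⟨hq, hne⟩ hzq
  obtain ⟨hreach, _, _⟩ := htree
  have key : ∀ v : Fin n, Relation.ReflTransGen (G (r+1)) root v →
      v ∈ influence G p r → (∀ q ∈ I, v ∈ influence G q r → q = p) →
      ∃ x ∈ influence G p r,
        (∀ q ∈ I, x ∈ influence G q r → q = p) ∧
        ∃ q ∈ I, q ≠ p ∧ x ∈ influence G q (r + 1) := by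
    intro v hv
    induction hv with
    | refl => intro h1 _; exact absurd h1 hroot
    | @tail b c hbc hedge ih =>
      intro hc hcuniq
      obtain ⟨q, hq, hbq⟩ := hcovmem b
      by_cases hqp : q = p
      · subst hqp
        by_cases hbuniq : ∀ q' ∈ I, b ∈ influence G q' r → q' = q
        · exact ih hbq hbuniq
        · push_neg at hbuniq
          obtain ⟨q', hq', hbq', hne⟩ := hbuniq
          exact ⟨c, hc, hcuniq, q', hq', hne, Or.inr ⟨b, hbq', hedge⟩⟩
      · exact ⟨c, hc, hcuniq, q, hq, hqp, Or.inr ⟨b, hbq, hedge⟩⟩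
  exact key z (hreach z) hzp hzuniq
end

section
/- If G_r is a rooted tree with ℓ leaves, then given a strict covering at time r-1, at most ℓ of the covering sets fail to grow in round r (i.e., at most ℓ indices p ∈ I satisfy S_p(r) = S_p(r-1)). -/
/-- if the round-`r+1` graph is a rooted tree with `ℓ` leaves,
then in a strict covering at time `r` at most `ℓ` covering sets fail to grow
in round `r+1`. -/
theorem strictCovering_few_nongrowing {n : ℕ} (G : ℕ → Fin n → Fin n → Prop)
    (I : Set (Fin n)) (r : ℕ) (root : Fin n) (ℓ : ℕ)
    (hstrict : isStrictCovering G I r)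
    (htree : IsRootedTree (G (r + 1)) root)
    (hleaves : {v | IsLeaf (G (r + 1)) v}.ncard = ℓ) :
    {p ∈ I | influence G p (r + 1) = influence G p r}.ncard ≤ ℓ := by
  classical
  obtain ⟨hcov, hmin⟩ := hstrict
  obtain ⟨hroot, huniq, hnr⟩ := htree
  set E := G (r + 1) with hE
  -- no cycles
  have hnocyc : ∀ v, ¬ Relation.TransGen E v v := by
    have key : ∀ v, Relation.ReflTransGen E root v → ¬ Relation.TransGen E v v := by
      intro v hv
      induction hv with
      | refl =>
        intro h
        obtain ⟨u, _, hu⟩ := Relation.TransGen.tail'_iff.mp h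
        exact hnr u hu
      | @tail c v' hac hcv ih =>
        intro h
        obtain ⟨u, hvu, huv⟩ := Relation.TransGen.tail'_iff.mp h
        have hvroot : v' ≠ root := fun hveq => hnr c (hveq ▸ hcv)
        obtain ⟨pu, hpu, hun⟩ := huniq _ hvroot
        have huc : u = c := (hun u huv).trans (hun c hcv).symm
        exact ih (Relation.TransGen.head' hcv (huc ▸ hvu))
    exact fun v => key v (hroot v)
  -- comparability of ancestors
  have hcomp : ∀ v a b : Fin n, Relation.ReflTransGen E a v → Relation.ReflTransGen E b v →
      Relation.ReflTransGen E a b ∨ Relation.ReflTransGen E b a := by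
    intro v a b hav
    induction hav with
    | refl => intro hb; right; exact hb
    | @tail c v' hac hcv ih =>
      intro hb
      rcases Relation.ReflTransGen.cases_tail hb with rfl | ⟨d, hbd, hdv⟩
      · left; exact hac.tail hcv
      · have hvroot : v' ≠ root := fun hveq => hnr c (hveq ▸ hcv)
        obtain ⟨pu, hpu, hun⟩ := huniq _ hvroot
        have hdc : d = c := (hun d hdv).trans (hun c hcv).symm
        exact ih (hdc ▸ hbd)
  -- every node has a leaf descendant
  have hleafdesc : ∀ u : Fin n, ∃ v, Relation.ReflTransGen E u v ∧ IsLeaf E v := by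
    have main : ∀ k (u : Fin n), {w | Relation.ReflTransGen E u w}.ncard ≤ k →
        ∃ v, Relation.ReflTransGen E u v ∧ IsLeaf E v := by
      intro k
      induction k with
      | zero =>
        intro u h
        have : 0 < {w | Relation.ReflTransGen E u w}.ncard :=
          (Set.ncard_pos (Set.toFinite _)).mpr ⟨u, Relation.ReflTransGen.refl⟩
        omega
      | succ k ih =>
        intro u h
        by_cases hl : IsLeaf E u
        · exact ⟨u, Relation.ReflTransGen.refl, hl⟩
        · have : ∃ v, E u v := by
            simpa [IsLeaf, not_forall] using hl
          obtain ⟨v, hv⟩ := this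
          have hsub : {w | Relation.ReflTransGen E v w} ⊆ {w | Relation.ReflTransGen E u w} :=
            fun w hw => Relation.ReflTransGen.head hv hw
          have hu : u ∈ {w | Relation.ReflTransGen E u w} \ {w | Relation.ReflTransGen E v w} :=
            ⟨Relation.ReflTransGen.refl, fun hvu => hnocyc u (Relation.TransGen.head' hv hvu)⟩
          have hlt : {w | Relation.ReflTransGen E v w}.ncard <
              {w | Relation.ReflTransGen E u w}.ncard := by
            refine Set.ncard_lt_ncard ⟨hsub, fun hsup => ?_⟩ (Set.toFinite _)
            exact hu.2 (hsup hu.1)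
          obtain ⟨w, hw1, hw2⟩ := ih v (by omega)
          exact ⟨w, Relation.ReflTransGen.head hv hw1, hw2⟩
    exact fun u => main _ u le_rfl
  -- non-growing sets are closed under reachability
  have hclosed : ∀ p : Fin n, influence G p (r + 1) = influence G p r →
      ∀ u v : Fin n, u ∈ influence G p r → Relation.ReflTransGen E u v →
        v ∈ influence G p r := by
    intro p hp u v hu hrt
    induction hrt with
    | refl => exact hu
    | @tail c v' hac hcv ih =>
      have hv : v' ∈ influence G p (r + 1) := Or.inr ⟨c, ih, hcv⟩
      rwa [hp] at hv
  -- private witnesses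
  have hwit : ∀ p ∈ I, ∃ w, w ∈ influence G p r ∧
      ∀ q ∈ I, q ≠ p → w ∉ influence G q r := by
    intro p hp
    have h1 := hmin p hp
    rw [isCovering] at h1
    obtain ⟨w, hw⟩ : ∃ w, w ∉ ⋃ q ∈ I \ {p}, influence G q r := by
      by_contra h
      push_neg at h
      exact h1 (Set.eq_univ_of_forall h)
    have hw2 : w ∈ ⋃ q ∈ I, influence G q r := by rw [hcov]; exact Set.mem_univ w
    simp only [Set.mem_iUnion] at hw2
    obtain ⟨q, hq, hwq⟩ := hw2
    have hqp : q = p := by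
      by_contra hne
      exact hw (Set.mem_biUnion ⟨hq, hne⟩ hwq)
    subst hqp
    refine ⟨w, hwq, fun q' hq' hne hmem => ?_⟩
    exact hw (Set.mem_biUnion ⟨hq', hne⟩ hmem)
  choose! w hw1 hw2 using hwit
  choose f hf1 hf2 using hleafdesc
  set T := {p ∈ I | influence G p (r + 1) = influence G p r} with hT
  have hTI : ∀ p ∈ T, p ∈ I := fun p hp => hp.1
  have hmaps : ∀ p ∈ T, f (w p) ∈ {v | IsLeaf E v} := fun p _ => hf2 (w p)
  have hinj : Set.InjOn (fun p => f (w p)) T := by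
    intro p hp q hq hfeq
    by_contra hne
    have heq : f (w p) = f (w q) := hfeq
    have h2 : Relation.ReflTransGen E (w q) (f (w p)) := by
      rw [heq]; exact hf1 (w q)
    have hcmp := hcomp (f (w p)) (w p) (w q) (hf1 (w p)) h2
    rcases hcmp with hpq | hqp
    · exact hw2 q (hTI q hq) p (hTI p hp) hne
        (hclosed p hp.2 (w p) (w q) (hw1 p (hTI p hp)) hpq)
    · exact hw2 p (hTI p hp) q (hTI q hq) (Ne.symm hne)
        (hclosed q hq.2 (w q) (w p) (hw1 q (hTI q hq)) hqp)
  calc T.ncard ≤ {v | IsLeaf E v}.ncard :=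
        Set.ncard_le_ncard_of_injOn _ hmaps hinj (Set.toFinite _)
    _ = ℓ := hleaves
end

section
/- For any sequence of directed rooted chains on n nodes, at the end of each round r ≤ n-1 there exist n-r influence sets S_{p_1}(r),...,S_{p_{n-r}}(r) such that each has size at least r+1 and for every nonempty index subset I ⊆ {1,...,n-r}, |⋃_{i∈I} S_{p_i}(r)| ≥ r + |I|. -/
def upClosed {n : ℕ} (σ : Fin n ≃ Fin n) (S : Set (Fin n)) : Prop :=
  ∀ i j : Fin n, i ≤ j → σ i ∈ S → σ j ∈ S

lemma upClosed_total {n : ℕ} (σ : Fin n ≃ Fin n) {S T : Set (Fin n)}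
    (hS : upClosed σ S) (hT : upClosed σ T) : S ⊆ T ∨ T ⊆ S := by
  by_cases h : S ⊆ T
  · exact Or.inl h
  · right
    obtain ⟨x, hxS, hxT⟩ := Set.not_subset.mp h
    intro y hy
    rcases le_total (σ.symm x) (σ.symm y) with hle | hle
    · have := hS _ _ hle (by simpa using hxS)
      simpa using this
    · exact absurd (by simpa using hT _ _ hle (by simpa using hy)) hxT

lemma exists_boundary {n : ℕ} (σ : Fin n ≃ Fin n) (S : Set (Fin n))
    (h : ¬ upClosed σ S) :
    ∃ i : Fin n, ∃ hi : (i : ℕ) + 1 < n, σ i ∈ S ∧ σ ⟨(i : ℕ) + 1, hi⟩ ∉ S := by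
  classical
  unfold upClosed at h
  push_neg at h
  obtain ⟨i, j, hij, hiS, hjS⟩ := h
  have hij' : i < j := lt_of_le_of_ne hij (by rintro rfl; exact hjS hiS)
  set T : Finset (Fin n) := Finset.univ.filter (fun m => σ m ∈ S ∧ m < j) with hT
  have hiT : i ∈ T := by simp [hT, hiS, hij']
  have hTne : T.Nonempty := ⟨i, hiT⟩
  set k := T.max' hTne with hk
  have hkT : k ∈ T := T.max'_mem hTne
  have hkS : σ k ∈ S := by
    have := (Finset.mem_filter.mp hkT).2; exact this.1
  have hkj : k < j := (Finset.mem_filter.mp hkT).2.2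
  have hk1 : (k : ℕ) + 1 < n := lt_of_le_of_lt (Nat.succ_le_of_lt hkj) j.isLt
  refine ⟨k, hk1, hkS, ?_⟩
  intro hmem
  have hle : (k : ℕ) + 1 ≤ (j : ℕ) := Nat.succ_le_of_lt hkj
  rcases lt_or_eq_of_le hle with h1 | h1
  · have hT' : (⟨(k : ℕ) + 1, hk1⟩ : Fin n) ∈ T := by
      simp only [hT, Finset.mem_filter, Finset.mem_univ, true_and]
      exact ⟨hmem, by simpa [Fin.lt_def] using h1⟩
    have := T.le_max' _ hT'
    rw [← hk] at this
    simp [Fin.le_def] at this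
  · have : (⟨(k : ℕ) + 1, hk1⟩ : Fin n) = j := Fin.ext h1
    rw [this] at hmem
    exact hjS hmem

/-- for any sequence of directed chains on `n ≥ 1` nodes and
any `r ≤ n-1`, there are `n - r` influence sets at time `r`, each of size at
least `r + 1`, such that the union of any `|I|` of them has size at least
`r + |I|`. -/
theorem directed_chains_influence_structure {n : ℕ} (hn : 1 ≤ n)
    (G : ℕ → Fin n → Fin n → Prop)
    (hchain : ∀ t, 1 ≤ t → IsDirChain (G t))
    (r : ℕ) (hr : r ≤ n - 1) :
    ∃ ps : Fin (n - r) → Fin n, Function.Injective ps ∧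
      (∀ i, r + 1 ≤ (influence G (ps i) r).ncard) ∧
      ∀ I : Finset (Fin (n - r)), I.Nonempty →
        r + I.card ≤ (⋃ i ∈ I, influence G (ps i) r).ncard := by
  classical
  revert hr
  induction r with
  | zero =>
    intro _
    refine ⟨fun i => i, fun a b h => h, ?_, ?_⟩
    · intro i
      simp [influence]
    · intro I hI
      have he : (⋃ i ∈ I, influence G i 0) = (I : Set (Fin (n - 0))) := by
        ext x; simp [influence]
      rw [he, Set.ncard_coe_finset]
      omega
  | succ r ih =>
    intro hr
    have hr' : r ≤ n - 1 := Nat.le_of_succ_le hr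
    obtain ⟨ps, hinj, _, hunion⟩ := ih hr'
    have hn2 : r + 2 ≤ n := by omega
    obtain ⟨σ, hσ⟩ := hchain (r + 1) (by omega)
    set S : Fin (n - r) → Set (Fin n) := fun i => influence G (ps i) r with hSdef
    set U : Finset (Fin (n - r)) → Set (Fin n) := fun I => ⋃ i ∈ I, S i with hUdef
    set Stuck : Finset (Fin (n - r)) → Prop :=
      fun I => I.Nonempty ∧ upClosed σ (U I) ∧ (U I).ncard < r + 1 + I.card with hStdef
    have hUunion : ∀ I J, U (I ∪ J) = U I ∪ U J := by
      intro I J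
      simp only [hUdef]
      exact Finset.set_biUnion_union I J S
    have key : ∀ I J : Finset (Fin (n - r)), Stuck I → Stuck J → U I ⊆ U J → I ⊆ J := by
      intro I J hI hJ hsub
      have hUeq : U (I ∪ J) = U J := by
        rw [hUunion]
        exact Set.union_eq_self_of_subset_left hsub
      have h1 : r + (I ∪ J).card ≤ (U (I ∪ J)).ncard :=
        hunion (I ∪ J) (hJ.1.mono Finset.subset_union_right)
      have h2 : (U J).ncard < r + 1 + J.card := hJ.2.2
      rw [hUeq] at h1
      have h3 : (I ∪ J).card ≤ J.card := by omega
      have h4 : J = I ∪ J := Finset.eq_of_subset_of_card_le Finset.subset_union_right h3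
      intro x hx
      rw [h4]
      exact Finset.mem_union_left _ hx
    have hcomp : ∀ I J, Stuck I → Stuck J → J ⊆ I ∨ I ⊆ J := by
      intro I J hI hJ
      rcases upClosed_total σ hI.2.1 hJ.2.1 with h | h
      · exact Or.inr (key I J hI hJ h)
      · exact Or.inl (key J I hJ hI h)
    have hnr : 0 < n - r := by omega
    obtain ⟨j, hj⟩ : ∃ j : Fin (n - r), ∀ I, Stuck I → j ∈ I := by
      by_cases hst : ∃ I, Stuck I
      · obtain ⟨I₀, hI₀⟩ := hst
        obtain ⟨J, hJmem, hJmin⟩ := Finset.exists_min_image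
          (Finset.univ.filter Stuck) Finset.card ⟨I₀, Finset.mem_filter.mpr ⟨Finset.mem_univ _, hI₀⟩⟩
        have hJ : Stuck J := (Finset.mem_filter.mp hJmem).2
        obtain ⟨j, hjJ⟩ := hJ.1
        refine ⟨j, fun I hI => ?_⟩
        rcases hcomp I J hI hJ with h | h
        · exact h hjJ
        · have hc := hJmin I (Finset.mem_filter.mpr ⟨Finset.mem_univ _, hI⟩)
          have hIJ : I = J := Finset.eq_of_subset_of_card_le h hc
          rw [hIJ]; exact hjJ
      · push_neg at hst
        exact ⟨⟨0, hnr⟩, fun I hI => absurd hI (hst I)⟩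
    have hcast : n - (r + 1) + 1 = n - r := by omega
    set j' : Fin (n - (r + 1) + 1) := Fin.cast hcast.symm j with hj'def
    set skip : Fin (n - (r + 1)) → Fin (n - r) :=
      fun i => Fin.cast hcast (j'.succAbove i) with hskipdef
    have hskip_inj : Function.Injective skip := by
      intro a b hab
      have h1 : j'.succAbove a = j'.succAbove b := by
        apply Fin.ext
        have := congrArg Fin.val hab
        simpa [hskipdef] using this
      exact Fin.succAbove_right_injective h1
    have hskip_ne : ∀ i, skip i ≠ j := by
      intro i h
      have h1 : (j'.succAbove i).val = j'.val := by
        have := congrArg Fin.val h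
        simpa [hskipdef, hj'def] using this
      exact Fin.succAbove_ne j' i (Fin.ext h1)
    have main : ∀ I' : Finset (Fin (n - (r + 1))), I'.Nonempty →
        r + 1 + I'.card ≤ (⋃ i ∈ I', influence G (ps (skip i)) (r + 1)).ncard := by
      intro I' hI'
      set I : Finset (Fin (n - r)) := I'.image skip with hIdef
      have hIcard : I.card = I'.card := Finset.card_image_of_injective _ hskip_inj
      have hIne : I.Nonempty := hI'.image _
      have hjI : j ∉ I := by
        simp only [hIdef, Finset.mem_image]
        rintro ⟨i, _, h⟩
        exact hskip_ne i h
      have hVeq : (⋃ i ∈ I', influence G (ps (skip i)) (r + 1))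
          = U I ∪ {q' | ∃ q ∈ U I, G (r + 1) q q'} := by
        ext x
        simp only [hUdef, hSdef, hIdef, influence, Set.mem_iUnion, Set.mem_union,
          Set.mem_setOf_eq, Finset.mem_coe, Finset.mem_image]
        constructor
        · rintro ⟨i, hi, hx | ⟨q, hq, hGq⟩⟩
          · exact Or.inl ⟨skip i, ⟨i, hi, rfl⟩, hx⟩
          · exact Or.inr ⟨q, ⟨skip i, ⟨i, hi, rfl⟩, hq⟩, hGq⟩
        · rintro (⟨i', ⟨i, hi, rfl⟩, hx⟩ | ⟨q, ⟨i', ⟨i, hi, rfl⟩, hq⟩, hGq⟩)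
          · exact ⟨i, hi, Or.inl hx⟩
          · exact ⟨i, hi, Or.inr ⟨q, hq, hGq⟩⟩
      have hsub : U I ⊆ U I ∪ {q' | ∃ q ∈ U I, G (r + 1) q q'} := Set.subset_union_left
      have hIH : r + I.card ≤ (U I).ncard := hunion I hIne
      rw [hVeq]
      by_cases hup : upClosed σ (U I)
      · have hnstuck : ¬ Stuck I := fun h => hjI (hj I h)
        have hnlt : ¬ ((U I).ncard < r + 1 + I.card) := fun h => hnstuck ⟨hIne, hup, h⟩
        have h1 : r + 1 + I.card ≤ (U I).ncard := not_lt.mp hnlt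
        have h2 : (U I).ncard ≤ (U I ∪ {q' | ∃ q ∈ U I, G (r + 1) q q'}).ncard :=
          Set.ncard_le_ncard hsub (Set.toFinite _)
        omega
      · obtain ⟨i, hi1, hiS, hiS'⟩ := exists_boundary σ (U I) hup
        have hmem : σ ⟨(i : ℕ) + 1, hi1⟩ ∈ {q' | ∃ q ∈ U I, G (r + 1) q q'} :=
          ⟨σ i, hiS, (hσ _ _).mpr ⟨i, ⟨(i : ℕ) + 1, hi1⟩, rfl, rfl, rfl⟩⟩
        have hss : U I ⊂ U I ∪ {q' | ∃ q ∈ U I, G (r + 1) q q'} :=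
          (Set.ssubset_iff_of_subset hsub).mpr ⟨_, Or.inr hmem, hiS'⟩
        have h2 := Set.ncard_lt_ncard hss (Set.toFinite _)
        omega
    refine ⟨fun i => ps (skip i), hinj.comp hskip_inj, ?_, fun I' hI' => main I' hI'⟩
    intro i
    have h := main {i} (Finset.singleton_nonempty i)
    simpa using h
end

section
/- In a single round with a directed chain communication graph, an influence set S of size m does not grow (S_p(r+1) = S_p(r)) if and only if S consists exactly of the last m nodes of the chain G_{r+1}. -/
/-- in a round whose graph is the directed chain
`σ 0 → σ 1 → ⋯ → σ (n-1)`, a set `S` of size `m` does not grow iff it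
consists exactly of the last `m` nodes of the chain. -/
theorem chain_no_growth_iff_last_block {n m : ℕ} (σ : Fin n ≃ Fin n)
    (S : Set (Fin n)) (hS : S.ncard = m) :
    S ∪ {v | ∃ u ∈ S, chainEdge σ u v} = S ↔
      S = σ '' {i | n - m ≤ (i : ℕ)} := by
  constructor
  · intro h
    have hcl : ∀ i j : Fin n, (j : ℕ) = (i : ℕ) + 1 → σ i ∈ S → σ j ∈ S := by
      intro i j hij hi
      have : σ j ∈ S ∪ {v | ∃ u ∈ S, chainEdge σ u v} :=
        Or.inr ⟨σ i, hi, i, j, hij, rfl, rfl⟩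
      rwa [h] at this
    set T : Set (Fin n) := σ ⁻¹' S with hT
    have hST : S = σ '' T := by
      rw [hT, Set.image_preimage_eq _ σ.surjective]
    have hTm : T.ncard = m := by
      rw [← hS, hST, Set.ncard_image_of_injective _ σ.injective]
    rcases eq_or_ne m 0 with hm | hm
    · subst hm
      have hSe : S = ∅ := by
        have := Set.ncard_eq_zero (Set.toFinite S) |>.mp hS
        exact this
      rw [hSe]
      symm
      rw [Set.image_eq_empty]
      ext i
      simp [Nat.not_le.mpr i.isLt]
    · have hTne : T.Nonempty := by
        rw [← Set.ncard_pos (Set.toFinite T)] at *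
        omega
      obtain ⟨i₀, hi₀T, hi₀min⟩ :=
        Set.exists_min_image T id (Set.toFinite T) hTne
      have hup : ∀ k : ℕ, ∀ j : Fin n, (j : ℕ) = (i₀ : ℕ) + k → j ∈ T := by
        intro k
        induction k with
        | zero => intro j hj; have : j = i₀ := Fin.ext (by omega); rwa [this]
        | succ k ih =>
            intro j hj
            have hlt : (i₀ : ℕ) + k < n := by have := j.isLt; omega
            have hj' : (⟨(i₀ : ℕ) + k, hlt⟩ : Fin n) ∈ T := ih _ rfl
            exact hcl ⟨(i₀ : ℕ) + k, hlt⟩ j (by simp only [Fin.val_mk]; omega) hj'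
      have hTeq : T = {j : Fin n | (i₀ : ℕ) ≤ (j : ℕ)} := by
        ext j
        simp only [Set.mem_setOf_eq]
        constructor
        · intro hj; exact Fin.le_def.mp (hi₀min j hj)
        · intro hj; exact hup ((j : ℕ) - (i₀ : ℕ)) j (by omega)
      have hIci : {j : Fin n | (i₀ : ℕ) ≤ (j : ℕ)} = ↑(Finset.Ici i₀) := by
        ext j
        simp only [Set.mem_setOf_eq, Finset.coe_Ici, Set.mem_Ici, Fin.le_def]
      have hcard : n - (i₀ : ℕ) = m := by
        rw [hTeq, hIci] at hTm
        rwa [Set.ncard_coe_finset, Fin.card_Ici] at hTm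
      have hi₀ : (i₀ : ℕ) = n - m := by have := i₀.isLt; omega
      rw [hST, hTeq, hi₀]
  · intro h
    ext v
    constructor
    · rintro (hv | ⟨u, hu, i, j, hij, rfl, rfl⟩)
      · exact hv
      · rw [h] at hu ⊢
        obtain ⟨i', hi', hi'e⟩ := hu
        have : i' = i := σ.injective hi'e
        subst this
        exact ⟨j, by simp at hi' ⊢; omega, rfl⟩
    · exact Or.inl
end

section
/- There exists a sequence of directed rooted trees on n nodes under which the dissemination time is at least ⌈(3n−1)/2⌉ − 2; hence the worst-case dissemination time over rooted trees satisfies B ≥ ⌈(3n−1)/2⌉ − 2. -/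
/-
Write `m = ⌊n/2⌋` and `a = ⌊(n-1)/2⌋`, so `a + m = n - 1`. The adversary first runs the chain
`0 → 1 → ⋯ → n-1` for `a` rounds, so the influence set of `p` is `[p, p + a]`. Up to round `n-2`
it then uses the tree with branches `n-1 → n-2 → ⋯ → m` and `n-1 → 0 → ⋯ → m-1`: for `p < m`
the set misses `n-1` and does not grow, while for `p ≥ m` it enters the second branch only at
speed one and does not reach `m-1`. Finally the chain `m-1 → ⋯ → n-1 → 0 → ⋯ → m-2` never
reaches its root `m-1`, and grows the cyclic interval starting at `p < m` by one node per round,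
so that up to round `⌈(3n-1)/2⌉ - 3 = n - 3 + m` it still misses the cyclic predecessor of `p`.
-/

theorem influence_subset_of_step {n : ℕ} {G : ℕ → Fin n → Fin n → Prop} {p : Fin n}
    {S : ℕ → Set (Fin n)} (h0 : p ∈ S 0) (hmono : ∀ r, S r ⊆ S (r + 1))
    (hstep : ∀ r u v, u ∈ S r → G (r + 1) u v → v ∈ S (r + 1)) :
    ∀ r, influence G p r ⊆ S r
  | 0 => Set.singleton_subset_iff.mpr h0
  | r + 1 => by
    have ih := influence_subset_of_step h0 hmono hstep r
    refine Set.union_subset (ih.trans (hmono r)) ?_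
    rintro v ⟨u, hu, he⟩
    exact hstep r u v (ih hu) he

def parentTree (n root : ℕ) (par : ℕ → ℕ) (u v : Fin n) : Prop :=
  (v : ℕ) ≠ root ∧ (u : ℕ) = par v

theorem isRootedTree_parentTree {n root : ℕ} (hroot : root < n) {par : ℕ → ℕ} (depth : ℕ → ℕ)
    (hpar : ∀ v < n, v ≠ root → par v < n ∧ depth (par v) < depth v) :
    IsRootedTree (parentTree n root par) ⟨root, hroot⟩ := by
  refine ⟨fun v => ?_, fun v hv => ?_, fun u hu => hu.1 rfl⟩
  · induction h : depth v using Nat.strong_induction_on generalizing v with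
    | _ d ih =>
      by_cases hv : (v : ℕ) = root
      · obtain rfl : v = ⟨root, hroot⟩ := Fin.ext hv
        exact .refl
      · obtain ⟨hlt, hdepth⟩ := hpar v v.isLt hv
        exact .tail (ih _ (h ▸ hdepth) ⟨par v, hlt⟩ rfl) ⟨hv, rfl⟩
  · have hv : (v : ℕ) ≠ root := fun h => hv (Fin.ext h)
    exact ⟨⟨par v, (hpar v v.isLt hv).1⟩, ⟨hv, rfl⟩, fun u hu => Fin.ext hu.2⟩

def cyclePred (n v : ℕ) : ℕ := if v = 0 then n - 1 else v - 1

/-- The chain `c → c+1 → ⋯ → n-1 → 0 → ⋯ → c-1`. -/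
def rotatedChain (n c : ℕ) : Fin n → Fin n → Prop := parentTree n c (cyclePred n)

theorem isRootedTree_rotatedChain {n c : ℕ} (hc : c < n) :
    IsRootedTree (rotatedChain n c) ⟨c, hc⟩ :=
  isRootedTree_parentTree hc (fun v => if c ≤ v then v - c else v + n - c) fun v hv hvc => by
    unfold cyclePred; split_ifs <;> omega

def twoBranchParent (n v : ℕ) : ℕ := if v = 0 then n - 1 else if v < n / 2 then v - 1 else v + 1

/-- The tree with branches `n-1 → n-2 → ⋯ → n/2` and `n-1 → 0 → 1 → ⋯ → n/2-1`. -/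
def twoBranchTree (n : ℕ) : Fin n → Fin n → Prop := parentTree n (n - 1) (twoBranchParent n)

theorem isRootedTree_twoBranchTree {n : ℕ} (hn : 1 ≤ n) :
    IsRootedTree (twoBranchTree n) ⟨n - 1, by omega⟩ :=
  isRootedTree_parentTree _ (fun v => if v < n / 2 then v + 1 else n - 1 - v) fun v hv hvr => by
    unfold twoBranchParent; split_ifs <;> omega

def witness (n r : ℕ) : Fin n → Fin n → Prop :=
  if r ≤ (n - 1) / 2 then rotatedChain n 0
  else if r ≤ n - 2 then twoBranchTree n
  else rotatedChain n (n / 2 - 1)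

theorem exists_isRootedTree_witness {n : ℕ} (hn : 1 ≤ n) (r : ℕ) :
    ∃ root, IsRootedTree (witness n r) root := by
  unfold witness
  split_ifs
  · exact ⟨_, isRootedTree_rotatedChain hn⟩
  · exact ⟨_, isRootedTree_twoBranchTree hn⟩
  · exact ⟨_, isRootedTree_rotatedChain (by omega)⟩

/-- The nodes `p, p+1, …, p+len` taken modulo `n`. -/
def cyclicInterval (n p len : ℕ) : Set (Fin n) :=
  {v | (p ≤ v ∧ (v : ℕ) ≤ p + len) ∨ (v : ℕ) + n ≤ p + len}

theorem cyclicInterval_ne_univ {n p len : ℕ} (hp : p < n) (hlen : len + 1 < n) :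
    cyclicInterval n p len ≠ Set.univ := by
  intro h
  have hpred : cyclePred n p < n := by unfold cyclePred; split_ifs <;> omega
  have hmem : (⟨cyclePred n p, hpred⟩ : Fin n) ∈ cyclicInterval n p len := h ▸ Set.mem_univ _
  simp only [cyclicInterval, cyclePred, Set.mem_ofPred_eq] at hmem
  split_ifs at hmem <;> omega

theorem influence_witness_subset_cyclicInterval {n : ℕ} {p : Fin n} (hp : (p : ℕ) < n / 2) :
    ∀ r, influence (witness n) p r ⊆
      cyclicInterval n p (min r ((n - 1) / 2) + (r - (n - 2))) := by
  refine influence_subset_of_step ?_ (fun r v hv => ?_) (fun r u v hu he => ?_)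
  · simp [cyclicInterval]
  · simp only [cyclicInterval, Set.mem_ofPred_eq] at hv ⊢
    omega
  · simp only [cyclicInterval, Set.mem_ofPred_eq] at hu ⊢
    unfold witness at he
    split_ifs at he <;>
      simp only [rotatedChain, twoBranchTree, parentTree, cyclePred, twoBranchParent] at he <;>
      split_ifs at he <;> omega

theorem influence_witness_subset_of_half_le {n : ℕ} {p : Fin n} (hp : n / 2 ≤ (p : ℕ)) :
    ∀ r, influence (witness n) p r ⊆
      {v | n / 2 ≤ (v : ℕ) ∨ ((v : ℕ) + (n - 1) / 2 + 1 ≤ r ∧ (v : ℕ) + 1 < n / 2)} := by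
  refine influence_subset_of_step ?_ (fun r v hv => ?_) (fun r u v hu he => ?_)
  · simp [hp]
  · simp only [Set.mem_ofPred_eq] at hv ⊢
    omega
  · simp only [Set.mem_ofPred_eq] at hu ⊢
    unfold witness at he
    split_ifs at he <;>
      simp only [rotatedChain, twoBranchTree, parentTree, cyclePred, twoBranchParent] at he <;>
      split_ifs at he <;> omega

/-- there is a sequence of rooted trees on `n` nodes under
which no influence set is all of `Π` before round `⌈(3n-1)/2⌉ - 2 = 3n/2 - 2`;
hence the worst-case dissemination time over rooted trees is at least
`⌈(3n-1)/2⌉ - 2`. -/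
theorem dissemination_trees_lower_bound {n : ℕ} (hn : 1 ≤ n) :
    ∃ G : ℕ → Fin n → Fin n → Prop,
      (∀ r, 1 ≤ r → ∃ root, IsRootedTree (G r) root) ∧
      ∀ r, r < 3 * n / 2 - 2 → ∀ p : Fin n, influence G p r ≠ Set.univ := by
  refine ⟨witness n, fun r _ => exists_isRootedTree_witness hn r, fun r hr p => ?_⟩
  rcases lt_or_ge (p : ℕ) (n / 2) with hp | hp
  · exact ne_top_of_le_ne_top (cyclicInterval_ne_univ p.isLt (by omega))
      (influence_witness_subset_cyclicInterval hp r)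
  · intro h
    have hmem := influence_witness_subset_of_half_le hp r
      (h ▸ Set.mem_univ (⟨n / 2 - 1, by omega⟩ : Fin n))
    simp only [Set.mem_ofPred_eq] at hmem
    omega
end
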